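/- Let (z_n) be defined by z_n = exp(Σ_{i=0}^{τ∧n − 1} g(X_i)) · v(X_{τ∧n}), where (X_n) is a Markov chain with transition operator P, v is bounded measurable with v(x) = e^{g(x)} Pv(x) for all x in the set {v < e^G}, and τ = inf{ n ≥ 0 : v(X_n) = e^{G(X_n)} }. Then (z_n) is a martingale with respect to the natural filtration under P_x, for every starting point x. -/

import Mathlib

/-!
Write `S_n = ∑_{i<n} g(X_i)`, which is `𝒢_{n-1}`-measurable. On the `𝒢_n`-event `{τ ≤ n}` the
stopped process is frozen, `z_{n+1} = z_n`. On its complement the chain is still in the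
continuation region `{v < e^G}`, so the Bellman equation and the Markov property give
`z_n = e^{S_n} v(X_n) = e^{S_{n+1}} Pv(X_n) = E[e^{S_{n+1}} v(X_{n+1}) | 𝒢_n] = E[z_{n+1} | 𝒢_n]`.
Boundedness of `g` and `v` makes every `z_n` integrable.
-/

open MeasureTheory

namespace MeasureTheory

variable {Ω : Type*}

theorem stoppedProcess_natCast_apply {β : Type*} (u : ℕ → Ω → β) (τ : Ω → ℕ) (n : ℕ) (ω : Ω) :
    stoppedProcess u (fun ω => (τ ω : WithTop ℕ)) n ω = u (min (τ ω) n) ω := by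
  rw [stoppedProcess, min_comm]
  rfl

theorem stoppedProcess_succ_nat {β : Type*} [AddZeroClass β] (u : ℕ → Ω → β)
    (τ : Ω → WithTop ℕ) (n : ℕ) :
    stoppedProcess u τ (n + 1) =
      {ω | τ ω ≤ n}.indicator (stoppedProcess u τ n) + {ω | τ ω ≤ n}ᶜ.indicator (u (n + 1)) := by
  ext ω
  by_cases h : τ ω ≤ n
  · have h' : τ ω ≤ ((n + 1 : ℕ) : WithTop ℕ) := h.trans (by exact_mod_cast n.le_succ)
    simp [stoppedProcess_eq_of_ge (i := n + 1) h', h, stoppedProcess_eq_of_ge (i := n) h]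
  · have h' : ((n + 1 : ℕ) : WithTop ℕ) ≤ τ ω := by
      induction hτ : τ ω with
      | top => exact le_top
      | coe k => exact WithTop.coe_le_coe.mpr (WithTop.coe_lt_coe.mp (hτ ▸ not_le.mp h))
    simp [stoppedProcess_eq_of_le (i := n + 1) h', h]

theorem condExp_add_mul_ae_eq {m m₀ : MeasurableSpace Ω} {μ : Measure Ω} (hm : m ≤ m₀)
    [SigmaFinite (μ.trim hm)] {a b y : Ω → ℝ} (ha : StronglyMeasurable[m] a)
    (ha_int : Integrable a μ) (hb : StronglyMeasurable[m] b) (hby : Integrable (b * y) μ)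
    (hy : Integrable y μ) :
    μ[a + b * y | m] =ᵐ[μ] a + b * μ[y | m] := by
  filter_upwards [condExp_add ha_int hby m, condExp_mul_of_stronglyMeasurable_left hb hby hy]
    with ω h_add h_mul
  simp only [h_add, Pi.add_apply, condExp_of_stronglyMeasurable hm ha ha_int, h_mul]

end MeasureTheory

section ExpWeightedValue

variable {Ω E : Type*} {X : ℕ → Ω → E} {g v : E → ℝ}

noncomputable def expWeightedValue (g v : E → ℝ) (X : ℕ → Ω → E) (n : ℕ) (ω : Ω) : ℝ :=
  Real.exp (∑ i ∈ Finset.range n, g (X i ω)) * v (X n ω)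

theorem abs_expWeightedValue_le {Cg Cv : ℝ} (hgb : ∀ e, g e ≤ Cg) (hvb : ∀ e, |v e| ≤ Cv)
    (n : ℕ) (ω : Ω) : |expWeightedValue g v X n ω| ≤ Real.exp (n * Cg) * Cv := by
  rw [expWeightedValue, abs_mul, abs_of_pos (Real.exp_pos _)]
  gcongr
  · simpa using Finset.sum_le_card_nsmul (Finset.range n) _ Cg fun i _ => hgb (X i ω)
  · exact hvb _

theorem expWeightedValue_eq_of_bellman {P : (E → ℝ) → (E → ℝ)} {n : ℕ} {ω : Ω}
    (h : v (X n ω) = Real.exp (g (X n ω)) * P v (X n ω)) :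
    expWeightedValue g v X n ω =
      Real.exp (∑ i ∈ Finset.range (n + 1), g (X i ω)) * P v (X n ω) := by
  rw [expWeightedValue, h, Finset.sum_range_succ, Real.exp_add, mul_assoc]

theorem stoppedProcess_expWeightedValue_succ (σ : Ω → WithTop ℕ) (n : ℕ) :
    stoppedProcess (expWeightedValue g v X) σ (n + 1) =
      {ω | σ ω ≤ n}.indicator (stoppedProcess (expWeightedValue g v X) σ n) +
        {ω | σ ω ≤ n}ᶜ.indicator (fun ω => Real.exp (∑ i ∈ Finset.range (n + 1), g (X i ω))) *
          fun ω => v (X (n + 1) ω) := by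
  rw [stoppedProcess_succ_nat]
  congr 1
  exact funext fun ω => Set.indicator_mul_left _ _ (fun ω => v (X (n + 1) ω))

theorem stoppedProcess_expWeightedValue_eq_of_bellman {P : (E → ℝ) → (E → ℝ)}
    {σ : Ω → WithTop ℕ} (hBellman : ∀ (n : ℕ) ω, (n : WithTop ℕ) < σ ω →
      v (X n ω) = Real.exp (g (X n ω)) * P v (X n ω)) (n : ℕ) :
    stoppedProcess (expWeightedValue g v X) σ n =
      {ω | σ ω ≤ n}.indicator (stoppedProcess (expWeightedValue g v X) σ n) +
        {ω | σ ω ≤ n}ᶜ.indicator (fun ω => Real.exp (∑ i ∈ Finset.range (n + 1), g (X i ω))) *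
          fun ω => P v (X n ω) := by
  ext ω
  by_cases hω : σ ω ≤ n
  · simp [hω]
  · have hlt : (n : WithTop ℕ) < σ ω := not_le.mp hω
    simp only [Pi.add_apply, Pi.mul_apply, Set.indicator_of_notMem (show ω ∉ {ω | σ ω ≤ n} from hω),
      Set.indicator_of_mem (show ω ∈ {ω | σ ω ≤ n}ᶜ from hω), zero_add]
    rw [stoppedProcess_eq_of_le (i := n) hlt.le, expWeightedValue_eq_of_bellman (hBellman n ω hlt)]

variable {m : MeasurableSpace Ω} [MeasurableSpace E] {𝒢 : Filtration ℕ m}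

theorem measurable_exp_sum_range (hX : ∀ n, Measurable[𝒢 n] (X n)) (hg : Measurable g)
    {k n : ℕ} (hk : k ≤ n + 1) :
    Measurable[𝒢 n] fun ω => Real.exp (∑ i ∈ Finset.range k, g (X i ω)) :=
  Real.measurable_exp.comp <| Finset.measurable_sum _ fun i hi =>
    hg.comp <| (hX i).mono (𝒢.mono (by rw [Finset.mem_range] at hi; omega)) le_rfl

theorem stronglyAdapted_expWeightedValue (hX : ∀ n, Measurable[𝒢 n] (X n))
    (hg : Measurable g) (hv : Measurable v) :
    StronglyAdapted 𝒢 (expWeightedValue g v X) := fun n =>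
  ((measurable_exp_sum_range hX hg n.le_succ).mul (hv.comp (hX n))).stronglyMeasurable

theorem integrable_expWeightedValue {μ : Measure Ω} [IsFiniteMeasure μ]
    (hX : ∀ n, Measurable[𝒢 n] (X n)) (hg : Measurable g) (hv : Measurable v)
    {Cg Cv : ℝ} (hgb : ∀ e, g e ≤ Cg) (hvb : ∀ e, |v e| ≤ Cv) (n : ℕ) :
    Integrable (expWeightedValue g v X n) μ :=
  .of_bound ((stronglyAdapted_expWeightedValue hX hg hv n).mono (𝒢.le n)).aestronglyMeasurable
    _ (.of_forall fun ω => abs_expWeightedValue_le hgb hvb n ω)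

theorem martingale_stoppedProcess_expWeightedValue {μ : Measure Ω} [IsFiniteMeasure μ]
    (hX : ∀ n, Measurable[𝒢 n] (X n)) (hg : Measurable g) (hv : Measurable v)
    {Cg Cv : ℝ} (hgb : ∀ e, g e ≤ Cg) (hvb : ∀ e, |v e| ≤ Cv) {P : (E → ℝ) → (E → ℝ)}
    (hMarkov : ∀ n, μ[(fun ω => v (X (n + 1) ω)) | 𝒢 n] =ᵐ[μ] fun ω => P v (X n ω))
    {σ : Ω → WithTop ℕ} (hσ : IsStoppingTime 𝒢 σ)
    (hBellman : ∀ (n : ℕ) ω, (n : WithTop ℕ) < σ ω →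
      v (X n ω) = Real.exp (g (X n ω)) * P v (X n ω)) :
    Martingale (stoppedProcess (expWeightedValue g v X) σ) 𝒢 μ := by
  have hY_int := integrable_expWeightedValue (μ := μ) hX hg hv hgb hvb
  have hZ := (stronglyAdapted_expWeightedValue hX hg hv).stoppedProcess_of_discrete hσ
  have hZ_int := integrable_stoppedProcess hσ hY_int
  refine martingale_nat hZ hZ_int fun n => ?_
  have hs : MeasurableSet[𝒢 n] {ω | σ ω ≤ n} := hσ.measurableSet_le n
  have hs_int := (hZ_int n).indicator (𝒢.le n _ hs)
  have hcontinue_int := (hZ_int (n + 1)).sub hs_int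
  rw [stoppedProcess_expWeightedValue_succ, add_sub_cancel_left] at hcontinue_int
  have hv_int : Integrable (fun ω => v (X (n + 1) ω)) μ :=
    .of_bound (hv.comp ((hX (n + 1)).mono (𝒢.le _) le_rfl)).aestronglyMeasurable Cv
      (.of_forall fun ω => hvb _)
  rw [stoppedProcess_expWeightedValue_succ]
  filter_upwards [condExp_add_mul_ae_eq (𝒢.le n) ((hZ n).indicator hs) hs_int
    ((measurable_exp_sum_range hX hg le_rfl).indicator hs.compl).stronglyMeasurable hcontinue_int
    hv_int, hMarkov n] with ω hce hMarkov_ω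
  rw [hce, Pi.add_apply, Pi.mul_apply, hMarkov_ω]
  exact congrFun (stoppedProcess_expWeightedValue_eq_of_bellman hBellman n) ω

end ExpWeightedValue

theorem stopped_exponential_value_martingale_general
    {Ω E : Type*} {m : MeasurableSpace Ω} [MeasurableSpace E]
    (μ : Measure Ω) [IsProbabilityMeasure μ]
    (𝒢 : Filtration ℕ m)
    (X : ℕ → Ω → E) (hXadapted : ∀ n, Measurable[𝒢 n] (X n))
    (P : (E → ℝ) → (E → ℝ))
    (g G v : E → ℝ) (hgm : Measurable g) (hvm : Measurable v)
    (Cg Cv : ℝ) (hgb : ∀ e, |g e| ≤ Cg)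
    (hvb : ∀ e, |v e| ≤ Cv)
    (hMarkov : ∀ n, μ[(fun ω => v (X (n + 1) ω)) | 𝒢 n]
        =ᵐ[μ] fun ω => P v (X n ω))
    (hBellman : ∀ e, v e < Real.exp (G e) → v e = Real.exp (g e) * P v e)
    (hBellman' : ∀ e, v e ≤ Real.exp (G e))
    (τ : Ω → ℕ)
    (hτ : ∀ ω, τ ω = sInf {n : ℕ | v (X n ω) = Real.exp (G (X n ω))})
    (hstop : IsStoppingTime 𝒢 (fun ω => (τ ω : WithTop ℕ))) :
    Martingale
      (fun n ω =>
        Real.exp (∑ i ∈ Finset.range (min (τ ω) n), g (X i ω)) * v (X (min (τ ω) n) ω))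
      𝒢 μ := by
  have hcontinue : ∀ (n : ℕ) ω, (n : WithTop ℕ) < τ ω → v (X n ω) < Real.exp (G (X n ω)) :=
    fun n ω hn => (hBellman' _).lt_of_ne fun hstopped =>
      (WithTop.coe_lt_coe.mp hn).not_ge (hτ ω ▸ Nat.sInf_le hstopped)
  have hZ := martingale_stoppedProcess_expWeightedValue (μ := μ) hXadapted hgm hvm
    (fun e => (le_abs_self _).trans (hgb e)) hvb hMarkov hstop
    fun n ω hn => hBellman _ (hcontinue n ω hn)
  convert hZ using 1
  ext n ω
  exact (stoppedProcess_natCast_apply (expWeightedValue g v X) τ n ω).symm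

theorem stopped_exponential_value_martingale
    {Ω E : Type*} {m : MeasurableSpace Ω} [MeasurableSpace E]
    (μ : Measure Ω) [IsProbabilityMeasure μ]
    (𝒢 : Filtration ℕ m)
    (X : ℕ → Ω → E) (hXadapted : ∀ n, Measurable[𝒢 n] (X n))
    (hXm : ∀ n, Measurable (X n))
    (P : (E → ℝ) → (E → ℝ))
    (g G v : E → ℝ) (hgm : Measurable g) (hGm : Measurable G) (hvm : Measurable v)
    (hg : ∀ e, 0 ≤ g e) (hG : ∀ e, 0 ≤ G e)
    (Cg CG Cv : ℝ) (hgb : ∀ e, |g e| ≤ Cg) (hGb : ∀ e, |G e| ≤ CG)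
    (hvb : ∀ e, |v e| ≤ Cv)
    (hMarkov : ∀ n, μ[(fun ω => v (X (n + 1) ω)) | 𝒢 n]
        =ᵐ[μ] fun ω => P v (X n ω))
    (hBellman : ∀ e, v e < Real.exp (G e) → v e = Real.exp (g e) * P v e)
    (hBellman' : ∀ e, v e ≤ Real.exp (G e))
    (τ : Ω → ℕ)
    (hτ : ∀ ω, τ ω = sInf {n : ℕ | v (X n ω) = Real.exp (G (X n ω))})
    (hτfin : ∀ ω, {n : ℕ | v (X n ω) = Real.exp (G (X n ω))}.Nonempty)
    (hstop : IsStoppingTime 𝒢 (fun ω => (τ ω : WithTop ℕ))) :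
    Martingale
      (fun n ω =>
        Real.exp (∑ i ∈ Finset.range (min (τ ω) n), g (X i ω)) * v (X (min (τ ω) n) ω))
      𝒢 μ :=
  stopped_exponential_value_martingale_general μ 𝒢 X hXadapted P g G v hgm hvm Cg Cv hgb hvb hMarkov
    hBellman hBellman' τ hτ hstop
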